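/- arXiv:1106.5829 — 5 statements merged into one kernel-verified Lean document; each statement's English description precedes it below -/
import Mathlib

section
/- In the binary-search hypothesis identification problem with N hypotheses, any non-adaptive policy (a fixed sequence of features, chosen before any observations) that identifies every hypothesis with certainty must query at least N−1 features. Consequently the ratio of non-adaptive to adaptive optimal cost is at least (N−1)/log₂(N). -/
/-!
Feature `(j, b)` holds at `h` exactly when `h / 2^(k-j) = 2b`. If it is left out of `S`, the
last elements `(2b+1)·2^(k-j) - 1` and `(2b+2)·2^(k-j) - 1` of the two halves of its block are
told apart by no other feature: at coarser levels they share a block, and at finer levels both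
sit at the end of a second half, where the quotient is odd. So an identifying `S` contains every
feature, and the heap numbering `(j, b) ↦ 2^(j-1) + b` maps the features onto `[1, 2^k)`.
-/

/-- Feature `F_{j,b}` in the binary-search construction with `N = 2^k` hypotheses
(0-indexed `h ∈ {0,...,2^k - 1}`): indicator of membership in the first half of the
`b`-th block of size `2^(k-j+1)` at level `j`. -/
def feat (k j b h : ℕ) : Bool :=
  decide (b * 2 ^ (k - j + 1) ≤ h ∧ h < b * 2 ^ (k - j + 1) + 2 ^ (k - j))

lemma feat_eq_decide_div (k j b h : ℕ) :
    feat k j b h = decide (h / 2 ^ (k - j) = 2 * b) := by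
  rw [feat, decide_eq_decide, Nat.div_eq_iff (Nat.two_pow_pos _), pow_succ,
    show b * (2 ^ (k - j) * 2) = 2 * b * 2 ^ (k - j) by ring]
  have := Nat.two_pow_pos (k - j)
  omega

lemma pred_mul_two_pow_div {a : ℕ} (ha : 0 < a) (n : ℕ) : (a * 2 ^ n - 1) / 2 ^ n = a - 1 := by
  simpa [mul_comm] using Nat.mul_sub_div 0 (2 ^ n) a (by positivity)

lemma pred_mul_two_pow_div_eq_two_mul_iff {m b m' b' : ℕ} (hne : (m', b') ≠ (m, b)) :
    ((2 * b + 1) * 2 ^ m - 1) / 2 ^ m' = 2 * b' ↔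
      ((2 * b + 2) * 2 ^ m - 1) / 2 ^ m' = 2 * b' := by
  rcases le_or_gt m' m with hle | hlt
  · obtain ⟨d, rfl⟩ := Nat.exists_eq_add_of_le hle
    have hdiv (a : ℕ) (ha : 0 < a) : (a * 2 ^ (m' + d) - 1) / 2 ^ m' = a * 2 ^ d - 1 := by
      rw [pow_add, mul_comm (2 ^ m'), ← mul_assoc, pred_mul_two_pow_div (by positivity)]
    rw [hdiv _ (by omega), hdiv _ (by omega)]
    rcases d with _ | d
    · have : b' ≠ b := by rintro rfl; simp at hne
      omega
    · have h1 : (2 * b + 1) * 2 ^ (d + 1) = 2 * ((2 * b + 1) * 2 ^ d) := by ring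
      have h2 : (2 * b + 2) * 2 ^ (d + 1) = 2 * ((2 * b + 2) * 2 ^ d) := by ring
      have h1pos : 0 < (2 * b + 1) * 2 ^ d := by positivity
      have h2pos : 0 < (2 * b + 2) * 2 ^ d := by positivity
      rw [h1, h2]
      omega
  · obtain ⟨d, rfl⟩ := Nat.exists_eq_add_of_lt hlt
    rw [show 2 ^ (m + d + 1) = 2 ^ m * (2 * 2 ^ d) by ring, ← Nat.div_div_eq_div_mul,
      ← Nat.div_div_eq_div_mul, ← Nat.div_div_eq_div_mul, ← Nat.div_div_eq_div_mul,
      pred_mul_two_pow_div (by omega), pred_mul_two_pow_div (by omega),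
      show (2 * b + 1 - 1) / 2 = b by omega, show (2 * b + 2 - 1) / 2 = b by omega]

lemma mem_of_feat_injective {k : ℕ} {S : Finset (ℕ × ℕ)} (hS : ∀ q ∈ S, q.1 ≤ k)
    (hinj : ∀ h1 < 2 ^ k, ∀ h2 < 2 ^ k,
      (∀ q ∈ S, feat k q.1 q.2 h1 = feat k q.1 q.2 h2) → h1 = h2)
    {j b : ℕ} (hj1 : 1 ≤ j) (hjk : j ≤ k) (hb : b < 2 ^ (j - 1)) : (j, b) ∈ S := by
  by_contra hjb
  obtain ⟨m, hm⟩ : ∃ m, k - j = m := ⟨_, rfl⟩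
  have hblock : (2 * b + 2) * 2 ^ m ≤ 2 ^ k := calc
    (2 * b + 2) * 2 ^ m ≤ 2 ^ (j - 1) * 2 * 2 ^ m := by gcongr; omega
    _ = 2 ^ k := by rw [← pow_succ, ← pow_add]; congr 1; omega
  have hagree : ∀ q ∈ S,
      feat k q.1 q.2 ((2 * b + 1) * 2 ^ m - 1) = feat k q.1 q.2 ((2 * b + 2) * 2 ^ m - 1) := by
    intro q hq
    rw [feat_eq_decide_div, feat_eq_decide_div, decide_eq_decide]
    refine pred_mul_two_pow_div_eq_two_mul_iff fun h => hjb ?_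
    obtain ⟨hq1, rfl⟩ := Prod.ext_iff.1 h
    convert hq
    have := hS q hq
    omega
  have hpos : 0 < 2 ^ m := by positivity
  have hpos' : 0 < (2 * b + 1) * 2 ^ m := by positivity
  rw [show (2 * b + 2) * 2 ^ m = (2 * b + 1) * 2 ^ m + 2 ^ m by ring] at hblock hagree
  generalize (2 * b + 1) * 2 ^ m = x at *
  generalize 2 ^ m = p at *
  have := hinj _ (by omega) _ (by omega) hagree
  omega

lemma two_pow_sub_one_le_card {k : ℕ} {S : Finset (ℕ × ℕ)}
    (hS : ∀ j b, 1 ≤ j → j ≤ k → b < 2 ^ (j - 1) → (j, b) ∈ S) : 2 ^ k - 1 ≤ S.card := by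
  have hsurj : Set.SurjOn (fun q : ℕ × ℕ => 2 ^ (q.1 - 1) + q.2) S (Finset.Ico 1 (2 ^ k)) := by
    intro n hn
    obtain ⟨hn1, hnk⟩ := Finset.mem_Ico.1 hn
    have hlo := Nat.pow_log_le_self 2 (x := n) (by omega)
    have hhi := Nat.lt_pow_succ_log_self one_lt_two n
    have hlog : Nat.log 2 n < k := Nat.log_lt_of_lt_pow (by omega) hnk
    rw [pow_succ] at hhi
    refine ⟨(Nat.log 2 n + 1, n - 2 ^ Nat.log 2 n), hS _ _ (by omega) (by omega) ?_, ?_⟩ <;>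
      simp only [Nat.add_sub_cancel] <;> omega
  simpa using Finset.card_le_card_of_surjOn _ hsurj

theorem nonadaptive_needs_all_features_general (k : ℕ) (S : Finset (ℕ × ℕ))
    (hS : ∀ q ∈ S, 1 ≤ q.1 ∧ q.1 ≤ k ∧ q.2 < 2 ^ (q.1 - 1))
    (hinj : ∀ h1 < 2 ^ k, ∀ h2 < 2 ^ k,
      (∀ q ∈ S, feat k q.1 q.2 h1 = feat k q.1 q.2 h2) → h1 = h2) :
    2 ^ k - 1 ≤ S.card ∧
      ((2 ^ k - 1 : ℝ)) / (k : ℝ) ≤ (S.card : ℝ) / (k : ℝ) := by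
  have hcard : 2 ^ k - 1 ≤ S.card := two_pow_sub_one_le_card fun _ _ hj1 hjk hb =>
    mem_of_feat_injective (fun q hq => (hS q hq).2.1) hinj hj1 hjk hb
  refine ⟨hcard, div_le_div_of_nonneg_right ?_ k.cast_nonneg⟩
  have := (Nat.cast_le (α := ℝ)).2 hcard
  rwa [Nat.cast_sub Nat.one_le_two_pow, Nat.cast_pow, Nat.cast_ofNat, Nat.cast_one] at this

/-- Any non-adaptive policy, i.e. a fixed set `S` of features (indexed by level/block
pairs `(j,b)` with `1 ≤ j ≤ k`, `b < 2^(j-1)`) chosen before any observations, that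
identifies every hypothesis with certainty (the map from hypotheses to feature vectors
restricted to `S` is injective) must contain at least `N - 1` features, where `N = 2^k`.
Consequently, the ratio of the non-adaptive cost to the adaptive optimal cost
`log₂ N = k` is at least `(N - 1) / log₂ N`. -/
theorem nonadaptive_needs_all_features (k : ℕ) (hk : 1 ≤ k) (S : Finset (ℕ × ℕ))
    (hS : ∀ q ∈ S, 1 ≤ q.1 ∧ q.1 ≤ k ∧ q.2 < 2 ^ (q.1 - 1))
    (hinj : ∀ h1 < 2 ^ k, ∀ h2 < 2 ^ k,
      (∀ q ∈ S, feat k q.1 q.2 h1 = feat k q.1 q.2 h2) → h1 = h2) :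
    2 ^ k - 1 ≤ S.card ∧
      ((2 ^ k - 1 : ℝ)) / (k : ℝ) ≤ (S.card : ℝ) / (k : ℝ) :=
  nonadaptive_needs_all_features_general k S hS hinj
end

section
/- Each feature in the binary-search construction at level j > 1 distinguishes exactly one pair of adjacent blocks and is the unique feature distinguishing the two hypotheses at the deepest level: for the level-k features (which split blocks of size 2), omitting any one such feature from the query set leaves two hypotheses with identical feature vectors, so the map from hypotheses to feature vectors restricted to the remaining features is not injective. -/
/-- For any level-`k` feature `F_{k,b}` (which splits a block of size 2), the two
hypotheses of that block (`2b` and `2b+1`, i.e. `2b+1` and `2b+2` in 1-indexed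
notation) agree on every other available feature `F_{j',b'}` with `(j',b') ≠ (k,b)`,
while `F_{k,b}` itself distinguishes them.  Hence omitting `F_{k,b}` from the query
set leaves two hypotheses with identical feature vectors, so the map from hypotheses
to the remaining feature vectors is not injective. -/
theorem deepest_feature_uniquely_distinguishes (k : ℕ) (hk : 1 ≤ k)
    (b : ℕ) (hb : b < 2 ^ (k - 1))
    (j' b' : ℕ) (hj1 : 1 ≤ j') (hj2 : j' ≤ k) (hb' : b' < 2 ^ (j' - 1))
    (hne : (j', b') ≠ (k, b)) :
    feat k j' b' (2 * b) = feat k j' b' (2 * b + 1) ∧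
      feat k k b (2 * b) ≠ feat k k b (2 * b + 1) := by
  constructor
  · rcases eq_or_lt_of_le hj2 with heq | hlt
    · subst heq
      have hbne : b' ≠ b := by
        intro h; subst h; exact hne rfl
      simp only [feat, Nat.sub_self, pow_zero, pow_one, decide_eq_decide]
      omega
    · obtain ⟨m, hm⟩ : ∃ m, k - j' = m + 1 := ⟨k - j' - 1, by omega⟩
      have h1 : 2 ^ (k - j') = 2 * 2 ^ m := by rw [hm, pow_succ]; ring
      have h2 : 2 ^ (k - j' + 1) = 4 * 2 ^ m := by
        rw [pow_succ, h1]; ring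
      have h3 : b' * (4 * 2 ^ m) = 4 * (b' * 2 ^ m) := by ring
      simp only [feat, h1, h2, h3, decide_eq_decide]
      omega
  · simp only [feat, Nat.sub_self, pow_zero, pow_one, ne_eq, decide_eq_decide]
    omega
end

section
/- For a greedy maximization of a monotone non-decreasing submodular set function F with F(∅)=0 over subsets of size at most T of a finite ground set, the greedy solution A^G satisfies F(A^G) ≥ (1 − 1/e) · max_{|A|≤T} F(A). -/
/-!
Submodularity bounds the value of any `B` with `|B| ≤ T` by the value of the current greedy set
plus `T` times the best marginal gain, so each greedy step closes at least a `1/T` fraction of the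
gap `F B - F (A i)`. After `T` steps the gap is at most `(1 - 1/T)^T F B ≤ e⁻¹ F B`.
-/

open Finset

section

variable {V : Type*} [DecidableEq V]

def IsSubmodular (F : Finset V → ℝ) : Prop :=
  ∀ A B : Finset V, A ⊆ B → ∀ x ∉ B, F (insert x B) - F B ≤ F (insert x A) - F A

namespace IsSubmodular

variable {F : Finset V → ℝ}

theorem le_add_sum_marginal (hsub : IsSubmodular F) (hmono : Monotone F) (S C : Finset V) :
    F (S ∪ C) ≤ F S + ∑ x ∈ C, (F (insert x S) - F S) := by
  induction C using Finset.induction_on with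
  | empty => simp
  | @insert a C haC ih =>
    rw [union_insert, sum_insert haC]
    by_cases ha : a ∈ S ∪ C
    · have hgain : F S ≤ F (insert a S) := hmono (subset_insert a S)
      rw [insert_eq_self.mpr ha]
      linarith
    · have hdim := hsub S (S ∪ C) subset_union_left a ha
      linarith

theorem le_add_card_mul_greedy_gain (hsub : IsSubmodular F) (hmono : Monotone F)
    {S : Finset V} {x : V} (hmax : ∀ y, F (insert y S) ≤ F (insert x S)) (B : Finset V) :
    F B ≤ F S + B.card * (F (insert x S) - F S) :=
  calc F B ≤ F (S ∪ B) := hmono subset_union_right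
    _ ≤ F S + ∑ y ∈ B, (F (insert y S) - F S) := hsub.le_add_sum_marginal hmono S B
    _ ≤ F S + ∑ _y ∈ B, (F (insert x S) - F S) := by
      gcongr with y; exact hmax y
    _ = F S + B.card * (F (insert x S) - F S) := by rw [sum_const, nsmul_eq_mul]

theorem greedy_gap_le (hsub : IsSubmodular F) (hmono : Monotone F)
    {S : Finset V} {x : V} (hmax : ∀ y, F (insert y S) ≤ F (insert x S))
    {T : ℕ} (hT : 0 < T) {B : Finset V} (hB : B.card ≤ T) :
    F B - F (insert x S) ≤ (1 - 1 / T) * (F B - F S) := by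
  have hT' : (0 : ℝ) < T := by exact_mod_cast hT
  have hgain : 0 ≤ F (insert x S) - F S := sub_nonneg.2 (hmono (subset_insert x S))
  have hbound : F B - F S ≤ T * (F (insert x S) - F S) :=
    calc F B - F S ≤ B.card * (F (insert x S) - F S) := by
          linarith [hsub.le_add_card_mul_greedy_gain hmono hmax B]
      _ ≤ T * (F (insert x S) - F S) := by gcongr
  have hfrac : (F B - F S) / T ≤ F (insert x S) - F S := by
    rwa [div_le_iff₀' hT']
  calc F B - F (insert x S) ≤ (F B - F S) - (F B - F S) / T := by linarith
    _ = (1 - 1 / T) * (F B - F S) := by ring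

end IsSubmodular

end

theorem greedy_one_minus_inv_e_general {V : Type*} [DecidableEq V]
    (F : Finset V → ℝ)
    (hmono : ∀ A B : Finset V, A ⊆ B → F A ≤ F B)
    (hsub : ∀ A B : Finset V, A ⊆ B → ∀ x ∉ B,
      F (insert x B) - F B ≤ F (insert x A) - F A)
    (hempty : F ∅ = 0)
    (T : ℕ) (hT : 1 ≤ T)
    (A : ℕ → Finset V) (hA0 : A 0 = ∅)
    (hgreedy : ∀ i, ∃ x : V, A (i + 1) = insert x (A i) ∧
      ∀ y : V, F (insert y (A i)) ≤ F (insert x (A i)))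
    (B : Finset V) (hB : B.card ≤ T) :
    (1 - Real.exp (-1)) * F B ≤ F (A T) := by
  have hmono' : Monotone F := fun _ _ h => hmono _ _ h
  have hratio : 0 ≤ 1 - 1 / (T : ℝ) :=
    sub_nonneg.2 (div_le_one_of_le₀ (by exact_mod_cast hT) (Nat.cast_nonneg T))
  have hgap : F B - F (A T) ≤ (1 - 1 / T) ^ T * (F B - F (A 0)) :=
    le_geom (u := fun i => F B - F (A i)) hratio T fun i _ => by
      obtain ⟨x, hx, hmax⟩ := hgreedy i
      simpa only [hx] using IsSubmodular.greedy_gap_le hsub hmono' hmax hT hB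
  have hFB : 0 ≤ F B := hempty ▸ hmono' (empty_subset B)
  have hexp := mul_le_mul_of_nonneg_right
    (Real.one_sub_div_pow_le_exp_neg (n := T) (t := 1) (by exact_mod_cast hT)) hFB
  rw [hA0, hempty, sub_zero] at hgap
  linarith

/-- Nemhauser–Wolsey–Fisher guarantee.  For greedy maximization of a monotone
non-decreasing submodular set function `F` with `F ∅ = 0` over subsets of size at
most `T` of a finite ground set, the greedy solution `A T` (built by `T` steps of
adding an element of maximum marginal gain) satisfies
`F(A T) ≥ (1 - 1/e) · max_{|B| ≤ T} F(B)`. -/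
theorem greedy_one_minus_inv_e {V : Type*} [DecidableEq V] [Fintype V]
    (F : Finset V → ℝ)
    (hmono : ∀ A B : Finset V, A ⊆ B → F A ≤ F B)
    (hsub : ∀ A B : Finset V, A ⊆ B → ∀ x ∉ B,
      F (insert x B) - F B ≤ F (insert x A) - F A)
    (hempty : F ∅ = 0)
    (T : ℕ) (hT : 1 ≤ T)
    (A : ℕ → Finset V) (hA0 : A 0 = ∅)
    (hgreedy : ∀ i, ∃ x : V, A (i + 1) = insert x (A i) ∧
      ∀ y : V, F (insert y (A i)) ≤ F (insert x (A i)))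
    (B : Finset V) (hB : B.card ≤ T) :
    (1 - Real.exp (-1)) * F B ≤ F (A T) :=
  greedy_one_minus_inv_e_general F hmono hsub hempty T hT A hA0 hgreedy B hB
end

section
/- For the greedy algorithm applied to a monotone submodular function F with F(∅) = 0, after t greedy steps the value satisfies F(A_t) ≥ (1 − (1 − 1/T)^t) · max_{|A| ≤ T} F(A); in particular a single greedy step attains at least a 1/T fraction of the T-element optimum. -/
/-- Submodular sum bound: `F (A ∪ S) ≤ F A + ∑ x in S, (F (insert x A) - F A)`. -/
lemma greedy_rate_aux {V : Type*} [DecidableEq V]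
    (F : Finset V → ℝ)
    (hmono : ∀ A B : Finset V, A ⊆ B → F A ≤ F B)
    (hsub : ∀ A B : Finset V, A ⊆ B → ∀ x ∉ B,
      F (insert x B) - F B ≤ F (insert x A) - F A)
    (A S : Finset V) :
    F (A ∪ S) ≤ F A + ∑ x ∈ S, (F (insert x A) - F A) := by
  induction S using Finset.induction with
  | empty => simp
  | @insert a S ha ih =>
    rw [Finset.sum_insert ha]
    have h1 : A ∪ insert a S = insert a (A ∪ S) := by
      ext y; simp [Finset.mem_insert, Finset.mem_union, or_left_comm]
    rw [h1]
    by_cases hmem : a ∈ A ∪ S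
    · rw [Finset.insert_eq_self.mpr hmem]
      have hnn : 0 ≤ F (insert a A) - F A :=
        sub_nonneg.mpr (hmono _ _ (Finset.subset_insert _ _))
      linarith
    · have := hsub A (A ∪ S) Finset.subset_union_left a hmem
      linarith

/-- Greedy convergence rate for a monotone submodular function `F` with `F ∅ = 0`:
after `t ≤ T` greedy steps, `F(A t) ≥ (1 - (1 - 1/T)^t) · max_{|B| ≤ T} F(B)`;
in particular a single greedy step attains at least a `1/T` fraction of the
`T`-element optimum. -/
theorem greedy_rate {V : Type*} [DecidableEq V] [Fintype V]
    (F : Finset V → ℝ)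
    (hmono : ∀ A B : Finset V, A ⊆ B → F A ≤ F B)
    (hsub : ∀ A B : Finset V, A ⊆ B → ∀ x ∉ B,
      F (insert x B) - F B ≤ F (insert x A) - F A)
    (hempty : F ∅ = 0)
    (T : ℕ) (hT : 1 ≤ T)
    (A : ℕ → Finset V) (hA0 : A 0 = ∅)
    (hgreedy : ∀ i, ∃ x : V, A (i + 1) = insert x (A i) ∧
      ∀ y : V, F (insert y (A i)) ≤ F (insert x (A i)))
    (B : Finset V) (hB : B.card ≤ T) :
    (∀ t ≤ T, (1 - (1 - 1 / (T : ℝ)) ^ t) * F B ≤ F (A t)) ∧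
      (1 / (T : ℝ)) * F B ≤ F (A 1) := by
  have hTpos : (0:ℝ) < (T : ℝ) := by exact_mod_cast hT
  have hTfrac : (0:ℝ) ≤ 1 - 1 / (T : ℝ) := by
    have : 1 / (T : ℝ) ≤ 1 := by
      rw [div_le_one hTpos]; exact_mod_cast hT
    linarith
  -- one step bound: F B ≤ F (A i) + T * (F (A (i+1)) - F (A i))
  have hstep : ∀ i, F B ≤ F (A i) + (T:ℝ) * (F (A (i+1)) - F (A i)) := by
    intro i
    obtain ⟨x, hx, hxmax⟩ := hgreedy i
    have hgain : 0 ≤ F (A (i+1)) - F (A i) := by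
      rw [hx]; exact sub_nonneg.mpr (hmono _ _ (Finset.subset_insert _ _))
    have hterm : ∀ y ∈ B, F (insert y (A i)) - F (A i) ≤ F (A (i+1)) - F (A i) := by
      intro y _
      rw [hx]; linarith [hxmax y]
    calc F B ≤ F (A i ∪ B) := hmono _ _ Finset.subset_union_right
      _ ≤ F (A i) + ∑ y ∈ B, (F (insert y (A i)) - F (A i)) :=
          greedy_rate_aux F hmono hsub (A i) B
      _ ≤ F (A i) + ∑ _y ∈ B, (F (A (i+1)) - F (A i)) := by
          have := Finset.sum_le_sum hterm
          linarith
      _ = F (A i) + (B.card : ℝ) * (F (A (i+1)) - F (A i)) := by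
          rw [Finset.sum_const, nsmul_eq_mul]
      _ ≤ F (A i) + (T:ℝ) * (F (A (i+1)) - F (A i)) := by
          have : (B.card : ℝ) ≤ (T:ℝ) := by exact_mod_cast hB
          nlinarith
  -- main induction
  have hmain : ∀ t, F B - F (A t) ≤ (1 - 1 / (T : ℝ)) ^ t * F B := by
    intro t
    induction t with
    | zero => simp [hA0, hempty]
    | succ t ih =>
      have h1 := hstep t
      have h2 : F B - F (A (t+1)) ≤ (1 - 1 / (T:ℝ)) * (F B - F (A t)) := by
        have hTne : (T:ℝ) ≠ 0 := ne_of_gt hTpos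
        have : (F B - F (A t)) / (T:ℝ) ≤ F (A (t+1)) - F (A t) := by
          rw [div_le_iff₀ hTpos]; linarith [h1]
        have hd : (1 - 1 / (T:ℝ)) * (F B - F (A t))
            = (F B - F (A t)) - (F B - F (A t)) / (T:ℝ) := by
          field_simp
        linarith [this, hd.ge]
      calc F B - F (A (t+1)) ≤ (1 - 1 / (T:ℝ)) * (F B - F (A t)) := h2
        _ ≤ (1 - 1 / (T:ℝ)) * ((1 - 1 / (T:ℝ)) ^ t * F B) := by
            exact mul_le_mul_of_nonneg_left ih hTfrac
        _ = (1 - 1 / (T:ℝ)) ^ (t+1) * F B := by ring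
  have hfirst : ∀ t ≤ T, (1 - (1 - 1 / (T : ℝ)) ^ t) * F B ≤ F (A t) := by
    intro t _
    have := hmain t
    nlinarith [this]
  refine ⟨hfirst, ?_⟩
  have := hfirst 1 hT
  simpa using this
end

section
/- Version-space reduction is adaptive submodular in the noiseless case: define for a partial observation (a partial function x from feature indices to values consistent with at least one hypothesis) the objective f(x) = N − |{h : V_h consistent with x}|. Then the expected marginal gain of observing feature k given partial observation x, under the uniform prior restricted to hypotheses consistent with x, is non-increasing as x is extended to any consistent refinement x'. -/
open scoped Classical in
/-- Hypotheses consistent with a partial observation `x` (a partial function from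
feature indices to values): those whose feature vector agrees with `x` wherever `x`
is defined. -/
noncomputable def cons {H Val : Type*} [Fintype H] {K : ℕ}
    (Vh : H → Fin K → Val) (x : Fin K → Option Val) : Finset H :=
  Finset.univ.filter fun h => ∀ k v, x k = some v → Vh h k = v

/-- Extend a partial observation by the value `v` for feature `k`. -/
def upd {Val : Type*} {K : ℕ} (x : Fin K → Option Val) (k : Fin K) (v : Val) :
    Fin K → Option Val :=
  fun k' => if k' = k then some v else x k'

/-- Expected marginal gain of observing feature `k` at partial observation `x`, for
the objective `f(x) = N - |{h consistent with x}|`, under the uniform prior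
restricted to the consistent hypotheses:
`Δ(k|x) = Σ_v P(V_H(k) = v | consistent with x) · (f(x ∪ {k ↦ v}) - f(x))`. -/
noncomputable def gain {H Val : Type*} [Fintype H] [Fintype Val] {K : ℕ}
    (Vh : H → Fin K → Val) (x : Fin K → Option Val) (k : Fin K) : ℝ :=
  ∑ v : Val, (((cons Vh (upd x k v)).card : ℝ) / ((cons Vh x).card : ℝ)) *
    (((cons Vh x).card : ℝ) - ((cons Vh (upd x k v)).card : ℝ))

/-!
Once `k` is unobserved, observing the value `v` cuts the version space `S` down to the
fibre `S_v` of `v` under `h ↦ V_h(k)`, so the gain is `∑_v |S_v| |S \ S_v| / (|S_v| + |S \ S_v|)`.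
Each summand is monotone in both counts, and both counts can only shrink when `S` does,
as it does when the observation is refined.
-/

open Finset (sum_le_sum sum_congr card_le_card filter_subset_filter
  card_filter_add_card_filter_not)
open scoped Finset Classical

lemma mul_div_add_le_mul_div_add {α : Type*} [Field α] [LinearOrder α] [IsStrictOrderedRing α]
    {a b c d : α} (hb : 0 ≤ b) (hc : 0 ≤ c) (hba : b ≤ a) (hcd : c ≤ d) :
    b * c / (b + c) ≤ a * d / (a + d) := by
  rcases (add_nonneg hb hc).eq_or_lt with hbc | hbc
  · rw [← hbc, div_zero]
    exact div_nonneg (mul_nonneg (hb.trans hba) (hc.trans hcd)) (by linarith)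
  · rw [div_le_div_iff₀ hbc (by linarith)]
    nlinarith [mul_nonneg (mul_nonneg (hb.trans hba) hb) (sub_nonneg.2 hcd),
      mul_nonneg (mul_nonneg hc (hc.trans hcd)) (sub_nonneg.2 hba)]

/-- Expected number of elements of `S` eliminated by learning the value of `f`, when the
element is drawn uniformly from `S`. -/
noncomputable def expectedElimination {H Val : Type*} [Fintype Val]
    (S : Finset H) (f : H → Val) : ℝ :=
  ∑ v : Val, (#(S.filter (f · = v)) * #(S.filter (f · ≠ v)) : ℝ) /
    (#(S.filter (f · = v)) + #(S.filter (f · ≠ v)))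

lemma expectedElimination_mono {H Val : Type*} [Fintype Val] {S T : Finset H}
    (hST : S ⊆ T) (f : H → Val) : expectedElimination S f ≤ expectedElimination T f := by
  refine sum_le_sum fun v _ => mul_div_add_le_mul_div_add (by positivity) (by positivity) ?_ ?_
  all_goals exact_mod_cast card_le_card (filter_subset_filter _ hST)

section Observation

variable {H Val : Type*} [Fintype H] {K : ℕ} (Vh : H → Fin K → Val)

lemma cons_subset_cons {x x' : Fin K → Option Val}
    (hext : ∀ k v, x k = some v → x' k = some v) : cons Vh x' ⊆ cons Vh x := by
  intro h hh
  simp only [cons, Finset.mem_filter, Finset.mem_univ, true_and] at hh ⊢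
  exact fun k v hkv => hh k v (hext k v hkv)

lemma cons_upd_eq_filter {x : Fin K → Option Val} {k : Fin K} (hk : x k = none) (v : Val) :
    cons Vh (upd x k v) = (cons Vh x).filter (Vh · k = v) := by
  ext h
  simp only [cons, Finset.mem_filter, Finset.mem_univ, true_and]
  unfold upd
  constructor
  · intro hh
    refine ⟨fun k' w hkw => hh k' w ?_, hh k v (if_pos rfl)⟩
    rwa [if_neg (by rintro rfl; simp [hk] at hkw)]
  · rintro ⟨hh, rfl⟩ k' w hkw
    split_ifs at hkw with hkk
    · cases hkw; rw [hkk]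
    · exact hh k' w hkw

lemma gain_eq_expectedElimination [Fintype Val] {x : Fin K → Option Val} {k : Fin K}
    (hk : x k = none) : gain Vh x k = expectedElimination (cons Vh x) (Vh · k) := by
  refine sum_congr rfl fun v _ => ?_
  have hsplit : (#((cons Vh x).filter (Vh · k = v)) + #((cons Vh x).filter (Vh · k ≠ v)) : ℝ)
      = #(cons Vh x) := by
    exact_mod_cast card_filter_add_card_filter_not _
  rw [← hsplit, cons_upd_eq_filter Vh hk, add_sub_cancel_left, div_mul_eq_mul_div]

end Observation

theorem version_space_reduction_adaptive_submodular_general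
    {H Val : Type*} [Fintype H] [Fintype Val] {K : ℕ}
    (Vh : H → Fin K → Val) (x x' : Fin K → Option Val)
    (hext : ∀ (k : Fin K) (v : Val), x k = some v → x' k = some v)
    (k : Fin K) (hk : x' k = none) :
    gain Vh x' k ≤ gain Vh x k := by
  have hxk : x k = none := by
    by_contra hne
    obtain ⟨v, hv⟩ := Option.ne_none_iff_exists'.1 hne
    simp [hext k v hv] at hk
  rw [gain_eq_expectedElimination Vh hk, gain_eq_expectedElimination Vh hxk]
  exact expectedElimination_mono (cons_subset_cons Vh hext) _

/-- Version-space reduction is adaptive submodular in the noiseless case: if the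
partial observation `x'` extends `x` (agreeing with it on its domain), both are
consistent with at least one hypothesis, and feature `k` is unobserved in `x'`, then
the expected marginal gain of observing `k` at `x'` is at most that at `x`. -/
theorem version_space_reduction_adaptive_submodular
    {H Val : Type*} [Fintype H] [Fintype Val] {K : ℕ}
    (Vh : H → Fin K → Val) (x x' : Fin K → Option Val)
    (hext : ∀ (k : Fin K) (v : Val), x k = some v → x' k = some v)
    (hx : (cons Vh x).Nonempty) (hx' : (cons Vh x').Nonempty)
    (k : Fin K) (hk : x' k = none) :
    gain Vh x' k ≤ gain Vh x k :=
  version_space_reduction_adaptive_submodular_general Vh x x' hext k hk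
end
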